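/- arXiv:1512.06971 — 4 statements merged into one kernel-verified Lean document; each statement's English description precedes it below -/
import Mathlib

section
/- Let 0 < r_w < r_e, let γ ∈ (0,1], A ∈ ℝ, M ≥ 0, and let v, v_γ : [r_w, r_e] → ℝ be differentiable functions with v(r_e) = v_γ(r_e) = 0. Suppose that for every r ∈ [r_w, r_e] one has (d/dr)(r·v(r)) = γ·A·r and (d/dr)(r·v_γ(r)) = γ·A·r + γ·r·F(r), where F : [r_w, r_e] → ℝ is a continuous function (representing g(v_γ(r))·v_γ(r)²) satisfying |F(r)| ≤ M for all r. Then for every r ∈ [r_w, r_e], |v_γ(r) − v(r)| ≤ γ·M·(r_e² − r²)/(2r); in particular |v_γ(r) − v(r)| ≤ γ·C with C = M·r_e²/(2·r_w) depending only on r_w, r_e and M. -/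
/-!
The quantity `w(r) = r (v_γ(r) - v(r))` satisfies `w' = γ r F(r)`, so `|w'(r)| ≤ γ M r`, and
`w(r_e) = 0`. Comparing `±w` with the primitive `γ M r² / 2` of that bound (the differences are
monotone) gives `|w(r)| ≤ γ M (r_e² - r²) / 2`; dividing by `r ≥ r_w` yields both estimates.
-/

open Set

section DerivBound

variable {f f' g g' : ℝ → ℝ} {a b : ℝ}

theorem monotoneOn_sub_const_mul_of_abs_deriv_le
    (hf : ∀ x ∈ Icc a b, HasDerivWithinAt f (f' x) (Icc a b) x)
    (hg : ∀ x ∈ Icc a b, HasDerivWithinAt g (g' x) (Icc a b) x)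
    (hle : ∀ x ∈ Ioo a b, |f' x| ≤ g' x) {c : ℝ} (hc : |c| ≤ 1) :
    MonotoneOn (fun x => g x - c * f x) (Icc a b) := by
  have hderiv : ∀ x ∈ Icc a b,
      HasDerivWithinAt (fun x => g x - c * f x) (g' x - c * f' x) (Icc a b) x :=
    fun x hx => (hg x hx).sub ((hf x hx).const_mul c)
  refine monotoneOn_of_hasDerivWithinAt_nonneg (f' := fun x => g' x - c * f' x) (convex_Icc a b)
    (fun x hx => (hderiv x hx).continuousWithinAt)
    (fun x hx => ?_) (fun x hx => ?_)
  · exact (hderiv x (interior_subset hx)).mono interior_subset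
  · rw [interior_Icc] at hx
    have : |c * f' x| ≤ g' x := by
      rw [abs_mul]
      exact (mul_le_of_le_one_left (abs_nonneg _) hc).trans (hle x hx)
    linarith [le_abs_self (c * f' x)]

theorem abs_sub_le_sub_of_abs_deriv_le
    (hf : ∀ x ∈ Icc a b, HasDerivWithinAt f (f' x) (Icc a b) x)
    (hg : ∀ x ∈ Icc a b, HasDerivWithinAt g (g' x) (Icc a b) x)
    (hle : ∀ x ∈ Ioo a b, |f' x| ≤ g' x) {x y : ℝ} (hx : x ∈ Icc a b) (hy : y ∈ Icc a b)
    (hxy : x ≤ y) :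
    |f y - f x| ≤ g y - g x := by
  have hplus := monotoneOn_sub_const_mul_of_abs_deriv_le hf hg hle (c := 1) (by simp) hx hy hxy
  have hminus := monotoneOn_sub_const_mul_of_abs_deriv_le hf hg hle (c := -1) (by simp) hx hy hxy
  simp only at hplus hminus
  rw [abs_le]
  constructor <;> linarith

theorem abs_le_of_abs_deriv_le_const_mul {w w' : ℝ → ℝ} {a b K r : ℝ}
    (hw : ∀ x ∈ Icc a b, HasDerivWithinAt w (w' x) (Icc a b) x) (hwb : w b = 0)
    (hle : ∀ x ∈ Ioo a b, |w' x| ≤ K * x) (hr : r ∈ Icc a b) :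
    |w r| ≤ K * (b ^ 2 - r ^ 2) / 2 := by
  have hbound : ∀ x ∈ Icc a b, HasDerivWithinAt (fun x => K * x ^ 2 / 2) (K * x) (Icc a b) x :=
    fun x _ => (((hasDerivAt_pow 2 x).const_mul K).div_const 2).hasDerivWithinAt.congr_deriv
      (by push_cast; ring)
  have := abs_sub_le_sub_of_abs_deriv_le hw hbound hle hr (right_mem_Icc.2 (hr.1.trans hr.2)) hr.2
  rw [hwb, zero_sub, abs_neg] at this
  linarith

end DerivBound

theorem pi_prop_affinity_full_truncated_general
    (r_w r_e γ A M : ℝ)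
    (hrw : 0 < r_w)
    (hγ0 : 0 < γ) (hM : 0 ≤ M)
    (v vγ F : ℝ → ℝ)
    (hv_re : v r_e = 0) (hvγ_re : vγ r_e = 0)
    (hv : ∀ r ∈ Set.Icc r_w r_e,
      HasDerivWithinAt (fun r => r * v r) (γ * A * r) (Set.Icc r_w r_e) r)
    (hvγ : ∀ r ∈ Set.Icc r_w r_e,
      HasDerivWithinAt (fun r => r * vγ r) (γ * A * r + γ * r * F r) (Set.Icc r_w r_e) r)
    (hFM : ∀ r ∈ Set.Icc r_w r_e, |F r| ≤ M) :
    ∀ r ∈ Set.Icc r_w r_e,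
      |vγ r - v r| ≤ γ * M * (r_e ^ 2 - r ^ 2) / (2 * r) ∧
      |vγ r - v r| ≤ γ * (M * r_e ^ 2 / (2 * r_w)) := by
  intro r hr
  have hr0 : 0 < r := hrw.trans_le hr.1
  have hdiff : ∀ s ∈ Icc r_w r_e,
      HasDerivWithinAt (fun s => s * vγ s - s * v s) (γ * s * F s) (Icc r_w r_e) s := by
    intro s hs
    have := (hvγ s hs).sub (hv s hs)
    rwa [add_sub_cancel_left] at this
  have hle : ∀ s ∈ Ioo r_w r_e, |γ * s * F s| ≤ γ * M * s := by
    intro s hs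
    have hγs : 0 < γ * s := mul_pos hγ0 (hrw.trans hs.1)
    rw [abs_mul, abs_of_pos hγs]
    calc γ * s * |F s| ≤ γ * s * M := by gcongr; exact hFM s (Ioo_subset_Icc_self hs)
      _ = γ * M * s := by ring
  have hweighted := abs_le_of_abs_deriv_le_const_mul hdiff (by simp [hv_re, hvγ_re]) hle hr
  have h1 : |vγ r - v r| ≤ γ * M * (r_e ^ 2 - r ^ 2) / (2 * r) := by
    rw [show r * vγ r - r * v r = r * (vγ r - v r) by ring, abs_mul, abs_of_pos hr0]
      at hweighted
    rw [le_div_iff₀ (by positivity)]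
    linarith
  refine ⟨h1, h1.trans ?_⟩
  calc γ * M * (r_e ^ 2 - r ^ 2) / (2 * r) ≤ γ * M * r_e ^ 2 / (2 * r) := by
        gcongr; nlinarith
    _ ≤ γ * M * r_e ^ 2 / (2 * r_w) := by gcongr; exact hr.1
    _ = γ * (M * r_e ^ 2 / (2 * r_w)) := by ring

/-- Proposition 3.1: the difference between the velocity `vγ` solving the full
radial equation (with the bounded nonlinear term `F`, `|F| ≤ M`) and the velocity
`v` solving the truncated equation is at most `γ·M·(r_e² − r²)/(2r) ≤ γ·C`
with `C = M·r_e²/(2·r_w)`. -/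
theorem pi_prop_affinity_full_truncated
    (r_w r_e γ A M : ℝ)
    (hrw : 0 < r_w) (hre : r_w < r_e)
    (hγ0 : 0 < γ) (hγ1 : γ ≤ 1) (hM : 0 ≤ M)
    (v vγ F : ℝ → ℝ)
    (hv_re : v r_e = 0) (hvγ_re : vγ r_e = 0)
    (hv : ∀ r ∈ Set.Icc r_w r_e,
      HasDerivWithinAt (fun r => r * v r) (γ * A * r) (Set.Icc r_w r_e) r)
    (hvγ : ∀ r ∈ Set.Icc r_w r_e,
      HasDerivWithinAt (fun r => r * vγ r) (γ * A * r + γ * r * F r) (Set.Icc r_w r_e) r)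
    (hF : ContinuousOn F (Set.Icc r_w r_e))
    (hFM : ∀ r ∈ Set.Icc r_w r_e, |F r| ≤ M) :
    ∀ r ∈ Set.Icc r_w r_e,
      |vγ r - v r| ≤ γ * M * (r_e ^ 2 - r ^ 2) / (2 * r) ∧
      |vγ r - v r| ≤ γ * (M * r_e ^ 2 / (2 * r_w)) :=
  pi_prop_affinity_full_truncated_general r_w r_e γ A M hrw hγ0 hM v vγ F hv_re hvγ_re hv hvγ hFM
end

section
/- Let 0 < r_w < r_e, h > 0, Q > 0, A = Q/(2πh(r_e² − r_w²)), and v(r) = A·(r_e² − r²)/r on [r_w, r_e]. Let G : [r_w, r_e] → ℝ be a continuous function (representing r ↦ g(v(r))·v(r), the modulus of the pressure gradient), and let W : [r_w, r_e] → ℝ be differentiable with W(r_w) = 0 and W'(r) = G(r) for all r. Then 2·A·∫_{r_w}^{r_e} W(r)·r dr = ∫_{r_w}^{r_e} G(r)·v(r)·r dr. Consequently, if ∫_{r_w}^{r_e} G(r)·v(r)·r dr > 0, the pseudo-steady-state productivity index J = Q·πh(r_e² − r_w²) / (2πh·∫_{r_w}^{r_e} W(r)·r dr) equals Q² / (2πh·∫_{r_w}^{r_e}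 G(r)·v(r)·r dr). -/
/-!
Integrating by parts against `r ↦ r² - r_e²`, which vanishes at `r_e`, while `W` vanishes at
`r_w`, turns `2∫ W r dr` into `∫ W' (r_e² - r²) dr`; since `v r · r = A (r_e² - r²)`, this is
`∫ G v r dr / A`. The formula for the productivity index is then plain algebra.
-/

open MeasureTheory Set intervalIntegral
open scoped Interval

theorem two_mul_integral_mul_self_eq_integral_mul_sq_sub {a b : ℝ} {W G : ℝ → ℝ}
    (hG : IntervalIntegrable G volume a b) (hW0 : W a = 0)
    (hW : ∀ x ∈ [[a, b]], HasDerivWithinAt W (G x) [[a, b]] x) :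
    2 * ∫ x in a..b, W x * x = ∫ x in a..b, G x * (b ^ 2 - x ^ 2) := by
  have hsq : ∀ x ∈ [[a, b]], HasDerivWithinAt (fun x ↦ x ^ 2 - b ^ 2) (2 * x) [[a, b]] x :=
    fun x _ ↦ by simpa using ((hasDerivAt_pow 2 x).sub_const (b ^ 2)).hasDerivWithinAt
  have hparts := integral_mul_deriv_eq_deriv_mul_of_hasDerivWithinAt hW hsq hG
    ((continuous_const_mul 2).intervalIntegrable a b)
  simp only [hW0, sub_self, mul_zero, zero_mul, zero_sub, ← intervalIntegral.integral_neg]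
    at hparts
  calc 2 * ∫ x in a..b, W x * x = ∫ x in a..b, W x * (2 * x) := by
        rw [← intervalIntegral.integral_const_mul]; congr with x; ring
    _ = ∫ x in a..b, -(G x * (x ^ 2 - b ^ 2)) := hparts
    _ = ∫ x in a..b, G x * (b ^ 2 - x ^ 2) := by congr with x; ring

theorem integral_mul_velocity_mul_self_eq {a b A : ℝ} {G v : ℝ → ℝ}
    (hv : ∀ r, v r = A * (b ^ 2 - r ^ 2) / r) :
    ∫ r in a..b, G r * v r * r = A * ∫ r in a..b, G r * (b ^ 2 - r ^ 2) := by
  rw [← intervalIntegral.integral_const_mul]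
  -- `v r * r` differs from `A (b² - r²)` only at the null point `r = 0`.
  refine integral_congr_ae ?_
  filter_upwards [volume.ae_ne 0] with r hr _
  rw [hv, mul_assoc, div_mul_cancel₀ _ hr]
  ring

theorem mul_div_eq_sq_div_of_two_mul_eq {Q p h D A X I : ℝ}
    (hA : A = Q / (2 * p * h * D)) (hX : 2 * A * X = I) (hI : I ≠ 0) :
    Q * (p * h * D) / (2 * p * h * X) = Q ^ 2 / (2 * p * h * I) := by
  have hA0 : A ≠ 0 := by rintro rfl; simp [← hX] at hI
  have hQ : Q ≠ 0 := by rintro rfl; simp [hA] at hA0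
  have hphD : 2 * p * h * D ≠ 0 := by intro h0; simp [hA, h0] at hA0
  have hp : p ≠ 0 := by rintro rfl; simp at hphD
  have hh : h ≠ 0 := by rintro rfl; simp at hphD
  have hD : D ≠ 0 := by rintro rfl; simp at hphD
  subst hX hA
  field_simp

theorem pi_velocity_representation_general
    (r_w r_e h Q A : ℝ)
    (hre : r_w < r_e)
    (hA : A = Q / (2 * Real.pi * h * (r_e ^ 2 - r_w ^ 2)))
    (v : ℝ → ℝ) (hv : ∀ r, v r = A * (r_e ^ 2 - r ^ 2) / r)
    (G W : ℝ → ℝ)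
    (hG : ContinuousOn G (Set.Icc r_w r_e))
    (hW0 : W r_w = 0)
    (hW : ∀ r ∈ Set.Icc r_w r_e, HasDerivWithinAt W (G r) (Set.Icc r_w r_e) r) :
    2 * A * (∫ r in r_w..r_e, W r * r) = (∫ r in r_w..r_e, G r * v r * r) ∧
    ((0 < ∫ r in r_w..r_e, G r * v r * r) →
      Q * (Real.pi * h * (r_e ^ 2 - r_w ^ 2)) /
          (2 * Real.pi * h * ∫ r in r_w..r_e, W r * r)
        = Q ^ 2 / (2 * Real.pi * h * ∫ r in r_w..r_e, G r * v r * r)) := by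
  rw [← uIcc_of_le hre.le] at hG hW
  have key : 2 * A * (∫ r in r_w..r_e, W r * r) = ∫ r in r_w..r_e, G r * v r * r := by
    rw [integral_mul_velocity_mul_self_eq hv,
      ← two_mul_integral_mul_self_eq_integral_mul_sq_sub hG.intervalIntegrable hW0 hW]
    ring
  exact ⟨key, fun hpos ↦ mul_div_eq_sq_div_of_two_mul_eq hA key hpos.ne'⟩

/-- Key identity in the proof of Proposition 3.2: if `W` is the basic pressure
profile with `W(r_w) = 0` and `W' = G` (where `G(r) = g(v(r))·v(r)` is the modulus
of the pressure gradient), then `2A∫ W r dr = ∫ G v r dr`, and consequently the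
pseudo-steady-state productivity index `Q|U|/∫_U W` equals
`Q²/(2πh ∫ r G(r) v(r) dr)`. -/
theorem pi_velocity_representation
    (r_w r_e h Q A : ℝ)
    (hrw : 0 < r_w) (hre : r_w < r_e) (hh : 0 < h) (hQ : 0 < Q)
    (hA : A = Q / (2 * Real.pi * h * (r_e ^ 2 - r_w ^ 2)))
    (v : ℝ → ℝ) (hv : ∀ r, v r = A * (r_e ^ 2 - r ^ 2) / r)
    (G W : ℝ → ℝ)
    (hG : ContinuousOn G (Set.Icc r_w r_e))
    (hW0 : W r_w = 0)
    (hW : ∀ r ∈ Set.Icc r_w r_e, HasDerivWithinAt W (G r) (Set.Icc r_w r_e) r) :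
    2 * A * (∫ r in r_w..r_e, W r * r) = (∫ r in r_w..r_e, G r * v r * r) ∧
    ((0 < ∫ r in r_w..r_e, G r * v r * r) →
      Q * (Real.pi * h * (r_e ^ 2 - r_w ^ 2)) /
          (2 * Real.pi * h * ∫ r in r_w..r_e, W r * r)
        = Q ^ 2 / (2 * Real.pi * h * ∫ r in r_w..r_e, G r * v r * r)) :=
  pi_velocity_representation_general r_w r_e h Q A hre hA v hv G W hG hW0 hW
end

section
/- Let 0 < r_w < r_e, h > 0, Q > 0, α > 0, β > 0, A = Q/(2πh(r_e² − r_w²)), v(r) = A·(r_e² − r²)/r. Suppose 0 < v_F ≤ v(r_w) and r_F ∈ [r_w, r_e] satisfies v(r_F) = v_F. Define g(ξ) = α + βξ for ξ ≥ v_F and g(ξ) = α for 0 ≤ ξ < v_F, and set J_FDD = Q² / (2πh·∫_{r_w}^{r_e} r·g(v(r))·v(r)² dr), L = 2πh(r_e² − r_w²)², S_F[r_w, r_F] = ∫_{r_w}^{r_F} (α + β·A·(r_e² − r²)·r^{−1})·(r_e² − r²)²·r^{−1} dr, and S_D[r_F, r_e] = α·∫_{r_F}^{r_e} (r_e² − r²)²·r^{−1}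 dr. Then J_FDD = L / (S_F[r_w, r_F] + S_D[r_F, r_e]). -/
/-!
Since `v` is strictly decreasing, the flow is Forchheimer exactly on `[r_w, r_F]` and Darcy on
`(r_F, r_e]`, so the integral in `J` splits at `r_F`. On each piece, substituting
`v r = A (r_e² - r²) / r` pulls out the factor `A²`, leaving `A² (S_F + S_D)`; with
`A = Q / (2πh (r_e² - r_w²))` the factors `Q²` cancel.
-/

open MeasureTheory Set intervalIntegral
open scoped Interval

theorem strictAntiOn_mul_sub_sq_div {A c : ℝ} (hA : 0 < A) (hc : 0 ≤ c) :
    StrictAntiOn (fun r => A * (c - r ^ 2) / r) (Ioi 0) := by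
  intro a (ha : 0 < a) b (hb : 0 < b) hab
  rw [div_lt_div_iff₀ hb ha]
  nlinarith [mul_nonneg (mul_nonneg hA.le hc) (sub_pos.2 hab).le,
    mul_pos (mul_pos (mul_pos hA ha) hb) (sub_pos.2 hab)]

theorem integral_eq_add_of_eqOn_uIoc {E : Type*} [NormedAddCommGroup E] [NormedSpace ℝ E]
    {μ : Measure ℝ} {f φ ψ : ℝ → E} {a b c : ℝ}
    (hφ : IntervalIntegrable φ μ a b) (hψ : IntervalIntegrable ψ μ b c)
    (h₁ : EqOn f φ (Ι a b)) (h₂ : EqOn f ψ (Ι b c)) :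
    ∫ x in a..c, f x ∂μ = (∫ x in a..b, φ x ∂μ) + ∫ x in b..c, ψ x ∂μ := by
  rw [← integral_add_adjacent_intervals (hφ.congr h₁.symm) (hψ.congr h₂.symm),
    integral_congr_ae (.of_forall h₁), integral_congr_ae (.of_forall h₂)]

theorem sq_div_mul_sq_mul_eq_of_eq_div {K : Type*} [Field K] {Q A c D S : K}
    (hA : A = Q / (c * D)) (hQ : Q ≠ 0) (hc : c ≠ 0) (hD : D ≠ 0) :
    Q ^ 2 / (c * (A ^ 2 * S)) = c * D ^ 2 / S := by
  subst hA
  rcases eq_or_ne S 0 with rfl | hS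
  · simp
  · field_simp

theorem pi_FDD_general
    (r_w r_e h Q α β A : ℝ)
    (hrw : 0 < r_w) (hre : r_w < r_e) (hh : 0 < h) (hQ : 0 < Q)
    (hA : A = Q / (2 * Real.pi * h * (r_e ^ 2 - r_w ^ 2)))
    (v : ℝ → ℝ) (hv : ∀ r, v r = A * (r_e ^ 2 - r ^ 2) / r)
    (v_F : ℝ)
    (r_F : ℝ) (hrF : r_F ∈ Set.Icc r_w r_e) (hvrF : v r_F = v_F)
    (g : ℝ → ℝ) (hg : ∀ ξ : ℝ, g ξ = if v_F ≤ ξ then α + β * ξ else α) :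
    Q ^ 2 / (2 * Real.pi * h * ∫ r in r_w..r_e, r * g (v r) * v r ^ 2)
      = 2 * Real.pi * h * (r_e ^ 2 - r_w ^ 2) ^ 2 /
          ((∫ r in r_w..r_F,
              (α + β * A * (r_e ^ 2 - r ^ 2) * r⁻¹) * (r_e ^ 2 - r ^ 2) ^ 2 * r⁻¹) +
            α * ∫ r in r_F..r_e, (r_e ^ 2 - r ^ 2) ^ 2 * r⁻¹) := by
  obtain ⟨hwF, hFe⟩ := hrF
  have hrF0 : 0 < r_F := hrw.trans_le hwF
  have hD : 0 < r_e ^ 2 - r_w ^ 2 := by nlinarith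
  have hApos : 0 < A := hA ▸ by positivity
  have hanti : StrictAntiOn v (Ioi 0) := by
    simpa only [← funext hv] using strictAntiOn_mul_sub_sq_div hApos (sq_nonneg r_e)
  have hForch : EqOn (fun r => r * g (v r) * v r ^ 2)
      (fun r => A ^ 2 * ((α + β * A * (r_e ^ 2 - r ^ 2) * r⁻¹) * (r_e ^ 2 - r ^ 2) ^ 2 * r⁻¹))
      (Ι r_w r_F) := by
    intro r hr
    rw [uIoc_of_le hwF] at hr
    dsimp only
    rw [hg, if_pos (hvrF ▸ (hanti.le_iff_ge hrF0 (hrw.trans hr.1)).2 hr.2), hv]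
    field_simp
  have hDarcy : EqOn (fun r => r * g (v r) * v r ^ 2)
      (fun r => A ^ 2 * (α * ((r_e ^ 2 - r ^ 2) ^ 2 * r⁻¹))) (Ι r_F r_e) := by
    intro r hr
    rw [uIoc_of_le hFe] at hr
    have hr0 : 0 < r := hrF0.trans hr.1
    dsimp only
    rw [hg, if_neg (hvrF ▸ (hanti.le_iff_ge hrF0 hr0).not.2 hr.1.not_ge), hv]
    field_simp
  have hne : ∀ {a b : ℝ}, 0 < a → 0 < b → ∀ x ∈ [[a, b]], x ≠ 0 := fun ha hb x hx h0 =>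
    notMem_uIcc_of_lt ha hb (h0 ▸ hx)
  rw [integral_eq_add_of_eqOn_uIoc (μ := volume)
    (ContinuousOn.intervalIntegrable (by fun_prop (disch := exact hne hrw hrF0)))
    (ContinuousOn.intervalIntegrable (by fun_prop (disch := exact hne hrF0 (hrw.trans hre))))
    hForch hDarcy]
  simp only [intervalIntegral.integral_const_mul, ← mul_add]
  exact sq_div_mul_sq_mul_eq_of_eq_div hA hQ.ne' (by positivity) hD.ne'

/-- Proposition 3.2, Forchheimer–Darcy–Darcy (FDD) case:
`J_FDD = L / (S_F[r_w, r_F] + S_D[r_F, r_e])`. -/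
theorem pi_FDD
    (r_w r_e h Q α β A : ℝ)
    (hrw : 0 < r_w) (hre : r_w < r_e) (hh : 0 < h) (hQ : 0 < Q)
    (hα : 0 < α) (hβ : 0 < β)
    (hA : A = Q / (2 * Real.pi * h * (r_e ^ 2 - r_w ^ 2)))
    (v : ℝ → ℝ) (hv : ∀ r, v r = A * (r_e ^ 2 - r ^ 2) / r)
    (v_F : ℝ) (hvF0 : 0 < v_F) (hvFw : v_F ≤ v r_w)
    (r_F : ℝ) (hrF : r_F ∈ Set.Icc r_w r_e) (hvrF : v r_F = v_F)
    (g : ℝ → ℝ) (hg : ∀ ξ : ℝ, g ξ = if v_F ≤ ξ then α + β * ξ else α) :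
    Q ^ 2 / (2 * Real.pi * h * ∫ r in r_w..r_e, r * g (v r) * v r ^ 2)
      = 2 * Real.pi * h * (r_e ^ 2 - r_w ^ 2) ^ 2 /
          ((∫ r in r_w..r_F,
              (α + β * A * (r_e ^ 2 - r ^ 2) * r⁻¹) * (r_e ^ 2 - r ^ 2) ^ 2 * r⁻¹) +
            α * ∫ r in r_F..r_e, (r_e ^ 2 - r ^ 2) ^ 2 * r⁻¹) :=
  pi_FDD_general r_w r_e h Q α β A hrw hre hh hQ hA v hv v_F r_F hrF hvrF g hg
end

section
/- Let 0 < r_w < r_e, h > 0, Q > 0, α > 0, λ > 0, 0 ≤ s < 1, A = Q/(2πh(r_e² − r_w²)), v(r) = A·(r_e² − r²)/r. Suppose 0 < v_D ≤ v(r_w) and r_D ∈ [r_w, r_e] satisfies v(r_D) = v_D. Define g(ξ) = α for ξ ≥ v_D and g(ξ) = λ·ξ^{−s} for 0 < ξ < v_D, and set J_DDpD = Q² / (2πh·∫_{r_w}^{r_e} r·g(v(r))·v(r)² dr), L = 2πh(r_e² − r_w²)², S_D[r_w, r_D] = α·∫_{r_w}^{r_D} (r_e² − r²)²·r^{−1}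 dr, and S_pD[r_D, r_e] = λ·A^{−s}·∫_{r_D}^{r_e} (r_e² − r²)^{2−s}·r^{s−1} dr. Then J_DDpD = L / (S_D[r_w, r_D] + S_pD[r_D, r_e]). -/
/-!
Since `v` is strictly decreasing, `v ≥ v(r_D)` exactly on `[r_w, r_D]`, so the integrand of the
productivity index is the Darcy term on `[r_w, r_D]` and the pre-Darcy term on `(r_D, r_e]`.
On each piece `r g(v) v²` is `A²` times the integrand of `S_D` resp. `λ A^{-s}` times that of
`S_pD`; the factor `A²` then cancels against `Q² = (2πh)² (r_e² − r_w²)² A²`.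
-/

open Set MeasureTheory intervalIntegral
open scoped Interval

noncomputable def radialVelocity (A r_e r : ℝ) : ℝ := A * (r_e ^ 2 - r ^ 2) / r

theorem radialVelocity_strictAntiOn {A : ℝ} (hA : 0 < A) (r_e : ℝ) :
    StrictAntiOn (radialVelocity A r_e) (Ioi 0) := by
  intro a ha b hb hab
  rw [mem_Ioi] at ha hb
  rw [radialVelocity, radialVelocity, div_lt_div_iff₀ hb ha]
  nlinarith [mul_pos (mul_pos hA (sub_pos.2 hab))
    (add_pos_of_nonneg_of_pos (sq_nonneg r_e) (mul_pos ha hb))]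

theorem mul_const_mul_radialVelocity_sq (A r_e α : ℝ) {r : ℝ} (hr : r ≠ 0) :
    r * α * radialVelocity A r_e r ^ 2 = A ^ 2 * (α * ((r_e ^ 2 - r ^ 2) ^ 2 * r⁻¹)) := by
  rw [radialVelocity]
  field_simp

theorem rpow_neg_mul_sq {x : ℝ} (hx : 0 ≤ x) {s : ℝ} (hs : s ≠ 2) :
    x ^ (-s) * x ^ 2 = x ^ (2 - s) := by
  rw [← Real.rpow_two, ← Real.rpow_add' hx (by contrapose! hs; linarith)]
  ring_nf

theorem mul_const_mul_rpow_neg_mul_radialVelocity_sq {A : ℝ} (hA : 0 ≤ A) {r_e r : ℝ}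
    (hr : 0 < r) (hre : r ≤ r_e) (lam : ℝ) {s : ℝ} (hs : s ≠ 2) :
    r * (lam * radialVelocity A r_e r ^ (-s)) * radialVelocity A r_e r ^ 2
      = A ^ 2 * (lam * A ^ (-s) * ((r_e ^ 2 - r ^ 2) ^ (2 - s) * r ^ (s - 1))) := by
  have hsub : 0 ≤ r_e ^ 2 - r ^ 2 := by nlinarith
  have hv : 0 ≤ radialVelocity A r_e r := by rw [radialVelocity]; positivity
  have hr_pow : r / r ^ (2 - s) = r ^ (s - 1) := by
    rw [show s - 1 = 1 - (2 - s) by ring, Real.rpow_sub hr 1, Real.rpow_one]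
  calc r * (lam * radialVelocity A r_e r ^ (-s)) * radialVelocity A r_e r ^ 2
      = lam * (r * radialVelocity A r_e r ^ (2 - s)) := by
        rw [← rpow_neg_mul_sq hv hs]; ring
    _ = lam * (A ^ (2 - s) * (r_e ^ 2 - r ^ 2) ^ (2 - s) * (r / r ^ (2 - s))) := by
        rw [radialVelocity, Real.div_rpow (by positivity) hr.le, Real.mul_rpow hA hsub]; ring
    _ = _ := by
        rw [hr_pow, ← rpow_neg_mul_sq hA hs]; ring

theorem eqOn_darcy_integrand {A r_e r_w r_D α : ℝ} {g : ℝ → ℝ} (hA : 0 < A) (hrw : 0 < r_w)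
    (hwD : r_w ≤ r_D) (hg : ∀ ξ, radialVelocity A r_e r_D ≤ ξ → g ξ = α) :
    EqOn (fun r => r * g (radialVelocity A r_e r) * radialVelocity A r_e r ^ 2)
      (fun r => A ^ 2 * (α * ((r_e ^ 2 - r ^ 2) ^ 2 * r⁻¹))) (Ι r_w r_D) := by
  intro r hr
  rw [uIoc_of_le hwD] at hr
  have hr0 : 0 < r := hrw.trans hr.1
  dsimp only
  rw [hg _ ((radialVelocity_strictAntiOn hA r_e).antitoneOn hr0 (hr0.trans_le hr.2) hr.2)]
  exact mul_const_mul_radialVelocity_sq A r_e α hr0.ne'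

theorem eqOn_preDarcy_integrand {A r_e r_D lam s : ℝ} {g : ℝ → ℝ} (hA : 0 < A)
    (hD : 0 < r_D) (hDe : r_D ≤ r_e) (hs : s ≠ 2)
    (hg : ∀ ξ, ξ < radialVelocity A r_e r_D → g ξ = lam * ξ ^ (-s)) :
    EqOn (fun r => r * g (radialVelocity A r_e r) * radialVelocity A r_e r ^ 2)
      (fun r => A ^ 2 * (lam * A ^ (-s) * ((r_e ^ 2 - r ^ 2) ^ (2 - s) * r ^ (s - 1))))
      (Ι r_D r_e) := by
  intro r hr
  rw [uIoc_of_le hDe] at hr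
  have hr0 : 0 < r := hD.trans hr.1
  dsimp only
  rw [hg _ (radialVelocity_strictAntiOn hA r_e hD hr0 hr.1)]
  exact mul_const_mul_rpow_neg_mul_radialVelocity_sq hA.le hr0 hr.2 lam hs

theorem ne_zero_of_mem_uIcc {a b r : ℝ} (ha : 0 < a) (hb : 0 < b) (hr : r ∈ [[a, b]]) :
    r ≠ 0 :=
  (lt_min ha hb |>.trans_le hr.1).ne'

theorem intervalIntegrable_sub_sq_sq_mul_inv {a b : ℝ} (ha : 0 < a) (hb : 0 < b) (c : ℝ) :
    IntervalIntegrable (fun r => (c - r ^ 2) ^ 2 * r⁻¹) volume a b := by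
  apply ContinuousOn.intervalIntegrable
  exact (by fun_prop : Continuous fun r : ℝ => (c - r ^ 2) ^ 2).continuousOn.mul <|
    continuousOn_id.inv₀ fun _ hr => ne_zero_of_mem_uIcc ha hb hr

theorem intervalIntegrable_sub_sq_rpow_mul_rpow {a b : ℝ} (ha : 0 < a) (hb : 0 < b) (c : ℝ)
    {p : ℝ} (hp : 0 ≤ p) (q : ℝ) :
    IntervalIntegrable (fun r => (c - r ^ 2) ^ p * r ^ q) volume a b := by
  apply ContinuousOn.intervalIntegrable
  exact (ContinuousOn.rpow_const (f := fun r => c - r ^ 2) (by fun_prop) fun _ _ => .inr hp).mul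
    (continuousOn_id.rpow_const fun _ hr => .inl (ne_zero_of_mem_uIcc ha hb hr))

theorem integral_eq_add_of_eqOn_uIoc_s9 {F f₁ f₂ : ℝ → ℝ} {a b c : ℝ}
    (h₁ : EqOn F f₁ (Ι a b)) (h₂ : EqOn F f₂ (Ι b c))
    (hf₁ : IntervalIntegrable f₁ volume a b)
    (hf₂ : IntervalIntegrable f₂ volume b c) :
    ∫ x in a..c, F x = (∫ x in a..b, f₁ x) + ∫ x in b..c, f₂ x := by
  rw [← integral_add_adjacent_intervals (hf₁.congr h₁.symm) (hf₂.congr h₂.symm),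
    integral_congr_ae (.of_forall h₁), integral_congr_ae (.of_forall h₂)]

theorem sq_div_mul_sq_mul_eq {Q K D A : ℝ} (hQ : Q ≠ 0) (hK : K ≠ 0) (hD : D ≠ 0)
    (hA : A = Q / (K * D)) (S : ℝ) :
    Q ^ 2 / (K * (A ^ 2 * S)) = K * D ^ 2 / S := by
  rw [← mul_assoc, ← div_div, hA]
  congr 1
  field_simp

theorem pi_DDpD_general
    (r_w r_e h Q α lam s A : ℝ)
    (hrw : 0 < r_w) (hre : r_w < r_e) (hh : 0 < h) (hQ : 0 < Q)
    (hs1 : s < 1)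
    (hA : A = Q / (2 * Real.pi * h * (r_e ^ 2 - r_w ^ 2)))
    (v : ℝ → ℝ) (hv : ∀ r, v r = A * (r_e ^ 2 - r ^ 2) / r)
    (v_D : ℝ)
    (r_D : ℝ) (hrD : r_D ∈ Set.Icc r_w r_e) (hvrD : v r_D = v_D)
    (g : ℝ → ℝ) (hg : ∀ ξ : ℝ, g ξ = if v_D ≤ ξ then α else lam * ξ ^ (-s)) :
    Q ^ 2 / (2 * Real.pi * h * ∫ r in r_w..r_e, r * g (v r) * v r ^ 2)
      = 2 * Real.pi * h * (r_e ^ 2 - r_w ^ 2) ^ 2 /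
          (α * (∫ r in r_w..r_D, (r_e ^ 2 - r ^ 2) ^ 2 * r⁻¹) +
            lam * A ^ (-s) *
              ∫ r in r_D..r_e, (r_e ^ 2 - r ^ 2) ^ (2 - s) * r ^ (s - 1)) := by
  obtain ⟨hwD, hDe⟩ := hrD
  have hD0 : 0 < r_D := hrw.trans_le hwD
  have hsq : 0 < r_e ^ 2 - r_w ^ 2 := by nlinarith
  have hA0 : 0 < A := by rw [hA]; positivity
  obtain rfl : v = radialVelocity A r_e := funext hv
  subst hvrD
  have hDarcy := eqOn_darcy_integrand (g := g) (α := α) hA0 hrw hwD fun ξ hξ => by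
    rw [hg, if_pos hξ]
  have hpreDarcy := eqOn_preDarcy_integrand (g := g) (lam := lam) (s := s) hA0 hD0 hDe
    (by linarith) fun ξ hξ => by rw [hg, if_neg hξ.not_ge]
  have hi₁ := ((intervalIntegrable_sub_sq_sq_mul_inv hrw hD0 (r_e ^ 2)).const_mul α).const_mul
    (A ^ 2)
  have hi₂ := ((intervalIntegrable_sub_sq_rpow_mul_rpow hD0 (hrw.trans hre) (r_e ^ 2)
    (p := 2 - s) (by linarith) (s - 1)).const_mul (lam * A ^ (-s))).const_mul (A ^ 2)
  rw [integral_eq_add_of_eqOn_uIoc_s9 hDarcy hpreDarcy hi₁ hi₂]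
  simp only [intervalIntegral.integral_const_mul]
  rw [← mul_add, sq_div_mul_sq_mul_eq hQ.ne' (by positivity) hsq.ne' hA]

/-- Proposition 3.2, Darcy–Darcy–pre-Darcy (DDpD) case:
`J_DDpD = L / (S_D[r_w, r_D] + S_pD[r_D, r_e])`, where the pre-Darcy law is
`g(ξ) = λ ξ^{−s}`, `0 ≤ s < 1`, for slow flow `ξ < v_D`. -/
theorem pi_DDpD
    (r_w r_e h Q α lam s A : ℝ)
    (hrw : 0 < r_w) (hre : r_w < r_e) (hh : 0 < h) (hQ : 0 < Q)
    (hα : 0 < α) (hlam : 0 < lam) (hs0 : 0 ≤ s) (hs1 : s < 1)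
    (hA : A = Q / (2 * Real.pi * h * (r_e ^ 2 - r_w ^ 2)))
    (v : ℝ → ℝ) (hv : ∀ r, v r = A * (r_e ^ 2 - r ^ 2) / r)
    (v_D : ℝ) (hvD0 : 0 < v_D) (hvDw : v_D ≤ v r_w)
    (r_D : ℝ) (hrD : r_D ∈ Set.Icc r_w r_e) (hvrD : v r_D = v_D)
    (g : ℝ → ℝ) (hg : ∀ ξ : ℝ, g ξ = if v_D ≤ ξ then α else lam * ξ ^ (-s)) :
    Q ^ 2 / (2 * Real.pi * h * ∫ r in r_w..r_e, r * g (v r) * v r ^ 2)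
      = 2 * Real.pi * h * (r_e ^ 2 - r_w ^ 2) ^ 2 /
          (α * (∫ r in r_w..r_D, (r_e ^ 2 - r ^ 2) ^ 2 * r⁻¹) +
            lam * A ^ (-s) *
              ∫ r in r_D..r_e, (r_e ^ 2 - r ^ 2) ^ (2 - s) * r ^ (s - 1)) :=
  pi_DDpD_general r_w r_e h Q α lam s A hrw hre hh hQ hs1 hA v hv v_D r_D hrD hvrD g hg
end
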